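/- In the algebra f, for every integer m with 0 ≤ m ≤ N, one has θ_i^{(m)} θ_j = Σ_{p=0}^{m} v^{(p−N)(m−p)} f′(i,j;p) θ_i^{(m−p)}. -/

import Mathlib

/-!
Expanding `f'(i,j;p)` and merging `θ_i^{(r)} θ_i^{(m-p)} = [t choose r]_v θ_i^{(t)}` with
`t = r + m - p` writes the right-hand side as `Σ_t c_t θ_i^{(m-t)} θ_j θ_i^{(t)}`, where `c_t`
is, up to a power of `v`, the alternating sum `Σ_r (-1)^r v^{r(t-1)} [t choose r]_v`. This sum
vanishes for `t ≥ 1`, which leaves only the term `θ_i^{(m)} θ_j`.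
-/

noncomputable section

open Finset

/-- The base field `K = ℚ(v)`. -/
abbrev K : Type := RatFunc ℚ

/-- The variable `v`. -/
def v : K := RatFunc.X

/-- The balanced quantum integer `[n]_v = (v^n - v^{-n})/(v - v^{-1})`. -/
def qnum (n : ℕ) : K := (v ^ (n : ℤ) - v ^ (-(n : ℤ))) / (v - v⁻¹)

/-- The quantum factorial `[n]_v!`. -/
def qfac : ℕ → K
  | 0 => 1
  | n + 1 => qfac n * qnum (n + 1)

/-- Divided power `x^{(n)} = x^n/[n]_v!` in the free algebra. -/
def fdp (x : FreeAlgebra K (Fin 2)) (n : ℕ) : FreeAlgebra K (Fin 2) :=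
  (qfac n)⁻¹ • x ^ n

/-- The generator `θ_i` in the free algebra. -/
def θi' : FreeAlgebra K (Fin 2) := FreeAlgebra.ι K 0

/-- The generator `θ_j` in the free algebra. -/
def θj' : FreeAlgebra K (Fin 2) := FreeAlgebra.ι K 1

/-- The two quantum Serre relations defining Lusztig's algebra `f` for the quiver with
two vertices `i, j` and `N` arrows from `j` to `i` (so `a_{ij} = a_{ji} = -N`). -/
inductive SerreRel (N : ℕ) : FreeAlgebra K (Fin 2) → FreeAlgebra K (Fin 2) → Prop
  | serre_i : SerreRel N
      (∑ k ∈ range (N + 2), ((-1 : K) ^ k) • (fdp θi' k * θj' * fdp θi' (N + 1 - k))) 0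
  | serre_j : SerreRel N
      (∑ k ∈ range (N + 2), ((-1 : K) ^ k) • (fdp θj' k * θi' * fdp θj' (N + 1 - k))) 0

/-- Lusztig's algebra `f`. -/
def LusztigF (N : ℕ) : Type := RingQuot (SerreRel N)

instance (N : ℕ) : Ring (LusztigF N) := inferInstanceAs (Ring (RingQuot (SerreRel N)))
instance (N : ℕ) : Algebra K (LusztigF N) := inferInstanceAs (Algebra K (RingQuot (SerreRel N)))

/-- The generator `θ_i` of `f`. -/
def θi (N : ℕ) : LusztigF N := RingQuot.mkAlgHom K (SerreRel N) θi'

/-- The generator `θ_j` of `f`. -/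
def θj (N : ℕ) : LusztigF N := RingQuot.mkAlgHom K (SerreRel N) θj'

/-- Divided power `x^{(n)} = x^n/[n]_v!` in `f`. -/
def dp {N : ℕ} (x : LusztigF N) (n : ℕ) : LusztigF N := (qfac n)⁻¹ • x ^ n


/-- The element `f'(i,j;m) = Σ_{r+s=m} (-1)^r v^{-r(N-m+1)} θ_i^{(s)} θ_j θ_i^{(r)}`. -/
def fm' (N m : ℕ) : LusztigF N :=
  ∑ r ∈ range (m + 1),
    ((-1 : K) ^ r * v ^ (-(r : ℤ) * ((N : ℤ) - (m : ℤ) + 1))) •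
      (dp (θi N) (m - r) * θj N * dp (θi N) r)

lemma v_ne_zero : v ≠ 0 := RatFunc.X_ne_zero

lemma v_pow_ne_one {n : ℕ} (hn : n ≠ 0) : v ^ n ≠ 1 := by
  intro h
  have hX : (Polynomial.X : Polynomial ℚ) ^ n = 1 :=
    RatFunc.algebraMap_injective ℚ (by simpa [v] using h)
  simpa [hn] using congrArg Polynomial.natDegree hX

lemma v_sub_v_inv_ne_zero : v - v⁻¹ ≠ 0 := by
  rw [sub_ne_zero]
  intro h
  apply v_pow_ne_one two_ne_zero
  rw [sq]
  nth_rw 2 [h]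
  exact mul_inv_cancel₀ v_ne_zero

lemma qnum_mul_v_sub_v_inv (n : ℕ) : qnum n * (v - v⁻¹) = v ^ n - (v ^ n)⁻¹ := by
  rw [qnum, zpow_neg, zpow_natCast, div_mul_cancel₀ _ v_sub_v_inv_ne_zero]

lemma qnum_ne_zero {n : ℕ} (hn : n ≠ 0) : qnum n ≠ 0 := by
  intro h
  have hinv := qnum_mul_v_sub_v_inv n
  rw [h, zero_mul, eq_comm, sub_eq_zero] at hinv
  apply v_pow_ne_one (n := n + n) (by omega)
  rw [pow_add]
  nth_rw 2 [hinv]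
  exact mul_inv_cancel₀ (pow_ne_zero _ v_ne_zero)

lemma qfac_ne_zero : ∀ n, qfac n ≠ 0
  | 0 => one_ne_zero
  | n + 1 => mul_ne_zero (qfac_ne_zero n) (qnum_ne_zero n.succ_ne_zero)

lemma qnum_add_add_two (a b : ℕ) :
    v ^ (b + 1) * qnum (a + b + 2) = v ^ (a + b + 2) * qnum (b + 1) + qnum (a + 1) := by
  apply mul_right_cancel₀ v_sub_v_inv_ne_zero
  simp only [add_mul, mul_assoc, qnum_mul_v_sub_v_inv]
  field_simp [v_ne_zero]
  ring

def qbin (a b : ℕ) : K := qfac (a + b) / (qfac a * qfac b)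

@[simp] lemma qbin_zero_left (b : ℕ) : qbin 0 b = 1 := by
  simp [qbin, qfac, qfac_ne_zero]

@[simp] lemma qbin_zero_right (a : ℕ) : qbin a 0 = 1 := by
  simp [qbin, qfac, qfac_ne_zero]

lemma qbin_pascal (a b : ℕ) :
    v ^ (b + 1) * qbin (a + 1) (b + 1) = v ^ (a + b + 2) * qbin (a + 1) b + qbin a (b + 1) := by
  have hfac : ∀ n, qfac (n + 1) = qfac n * qnum (n + 1) := fun _ => rfl
  have ha := qnum_ne_zero a.succ_ne_zero
  have hb := qnum_ne_zero b.succ_ne_zero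
  rw [qbin, qbin, qbin, show a + 1 + (b + 1) = a + b + 1 + 1 by omega,
    show a + 1 + b = a + b + 1 by omega, show a + (b + 1) = a + b + 1 by omega,
    hfac (a + b + 1), hfac a, hfac b]
  field_simp [qfac_ne_zero]
  linear_combination qnum_add_add_two a b

/-- By the Pascal rule the terms are the successive differences of
`(-1)^k v^{k(t+1)} [t choose k]_v`, so the sum telescopes. -/
lemma sum_neg_one_pow_mul_qbin_eq_zero (t : ℕ) :
    ∑ k ∈ range (t + 2), (-1 : K) ^ k * v ^ (k * t) * qbin k (t + 1 - k) = 0 := by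
  set c : ℕ → K := fun k => (-1) ^ k * v ^ (k * (t + 1)) * qbin k (t - k)
  have hdiff : ∀ k ∈ range t,
      (-1 : K) ^ (k + 1) * v ^ ((k + 1) * t) * qbin (k + 1) (t + 1 - (k + 1)) =
        c (k + 1) - c k := by
    intro k hk
    obtain ⟨b, rfl⟩ : ∃ b, t = k + b + 1 := ⟨t - k - 1, by rw [mem_range] at hk; omega⟩
    simp only [c, show k + b + 1 + 1 - (k + 1) = b + 1 by omega,
      show k + b + 1 - (k + 1) = b by omega, show k + b + 1 - k = b + 1 by omega]
    linear_combination (-1 : K) ^ (k + 1) * v ^ (k * (k + b + 2)) * qbin_pascal k b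
  rw [sum_range_succ, sum_range_succ', sum_congr rfl hdiff, sum_range_sub]
  simp only [c, tsub_self, tsub_zero, qbin_zero_left, qbin_zero_right, pow_zero, zero_mul, mul_one,
    sub_add_cancel]
  ring

lemma sum_range_sum_range_reflect {M : Type*} [AddCommMonoid M] (m : ℕ) (F : ℕ → ℕ → M) :
    ∑ p ∈ range (m + 1), ∑ r ∈ range (p + 1), F p r =
      ∑ t ∈ range (m + 1), ∑ r ∈ range (t + 1), F (m - t + r) r := by
  rw [sum_sigma', sum_sigma']
  refine sum_nbij' (fun a => ⟨m - a.1 + a.2, a.2⟩) (fun a => ⟨m - a.1 + a.2, a.2⟩)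
    ?_ ?_ ?_ ?_ ?_ <;> rintro ⟨p, r⟩ h <;> simp only [mem_sigma, mem_range] at h ⊢
  · omega
  · omega
  · simp only [Sigma.mk.injEq, heq_eq_eq, and_true]
    omega
  · simp only [Sigma.mk.injEq, heq_eq_eq, and_true]
    omega
  · rw [show m - (m - p + r) + r = p by omega]

lemma dp_mul_dp {N : ℕ} (x : LusztigF N) (a b : ℕ) :
    dp x a * dp x b = qbin a b • dp x (a + b) := by
  rw [dp, dp, dp, smul_mul_smul_comm, ← pow_add, smul_smul, qbin]
  congr 1
  field_simp [qfac_ne_zero]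

@[simp] lemma dp_zero {N : ℕ} (x : LusztigF N) : dp x 0 = 1 := by
  simp [dp, qfac]

lemma smul_dp_mul_dp_reindex {N : ℕ} (x y : LusztigF N) {m p r t : ℕ} (hpt : p + t = m + r)
    (hpm : p ≤ m) :
    v ^ (((p : ℤ) - N) * ((m : ℤ) - p)) •
      (((-1 : K) ^ r * v ^ (-(r : ℤ) * ((N : ℤ) - p + 1))) • (dp x (p - r) * y * dp x r) *
        dp x (m - p)) =
    (v ^ (((m : ℤ) - t - N) * t) *
        ((-1) ^ r * v ^ ((r : ℤ) * ((t : ℤ) - 1)) * qbin r (t - r))) •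
      (dp x (m - t) * y * dp x t) := by
  have hp : (p : ℤ) = m - t + r := by omega
  have hv : v ^ (((p : ℤ) - N) * ((m : ℤ) - p)) * v ^ (-(r : ℤ) * ((N : ℤ) - p + 1)) =
      v ^ (((m : ℤ) - t - N) * t) * v ^ ((r : ℤ) * ((t : ℤ) - 1)) := by
    rw [← zpow_add₀ v_ne_zero, ← zpow_add₀ v_ne_zero, hp]
    ring_nf
  rw [show p - r = m - t by omega, show m - p = t - r by omega, smul_mul_assoc,
    mul_assoc _ (dp x r), dp_mul_dp, show r + (t - r) = t by omega, mul_smul_comm, smul_smul,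
    smul_smul]
  congr 1
  linear_combination (-1 : K) ^ r * qbin r (t - r) * hv

theorem stmt2_general (N m : ℕ) :
    dp (θi N) m * θj N =
      ∑ p ∈ range (m + 1),
        v ^ (((p : ℤ) - (N : ℤ)) * ((m : ℤ) - (p : ℤ))) • (fm' N p * dp (θi N) (m - p)) := by
  set c : ℕ → ℕ → K := fun t r =>
    v ^ (((m : ℤ) - t - N) * t) * ((-1) ^ r * v ^ ((r : ℤ) * ((t : ℤ) - 1)) * qbin r (t - r))
  have hvanish : ∀ t, ∑ r ∈ range (t + 2), c (t + 1) r = 0 := by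
    intro t
    have hc : ∀ r, c (t + 1) r = v ^ (((m : ℤ) - (t + 1 : ℕ) - N) * (t + 1 : ℕ)) *
        ((-1) ^ r * v ^ (r * t) * qbin r (t + 1 - r)) := by
      intro r
      have hexp : (r : ℤ) * (((t + 1 : ℕ) : ℤ) - 1) = ((r * t : ℕ) : ℤ) := by
        push_cast
        ring
      simp only [c]
      rw [hexp, zpow_natCast]
    simp only [hc, ← mul_sum, sum_neg_one_pow_mul_qbin_eq_zero, mul_zero]
  simp only [fm', sum_mul, smul_sum]
  rw [sum_range_sum_range_reflect, sum_congr rfl fun t ht => sum_congr rfl fun r hr => by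
    simp only [mem_range] at ht hr
    exact smul_dp_mul_dp_reindex _ _ (t := t) (by omega) (by omega)]
  simp only [← sum_smul]
  rw [sum_range_succ', sum_eq_zero fun t _ => by rw [(hvanish t : _ = (0 : K)), zero_smul]]
  simp

/-- In `f`, for `0 ≤ m ≤ N`:
`θ_i^{(m)} θ_j = Σ_{p=0}^{m} v^{(p-N)(m-p)} f'(i,j;p) θ_i^{(m-p)}`. -/
theorem stmt2 (N m : ℕ) (hm : m ≤ N) :
    dp (θi N) m * θj N =
      ∑ p ∈ range (m + 1),
        v ^ (((p : ℤ) - (N : ℤ)) * ((m : ℤ) - (p : ℤ))) • (fm' N p * dp (θi N) (m - p)) :=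
  stmt2_general N m
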